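/- arXiv:1810.07220 — 2 statements merged into one kernel-verified Lean document; each statement's English description precedes it below -/
import Mathlib

section
/- For every temperature T > 0 and every cost function C : 𝒱 → ℝ, the Gibbs distribution π_T is the unique stationary probability distribution of the chain: if π : 𝒱 → [0, 1] satisfies Σ_{S ∈ 𝒱} π(S) = 1 and Σ_{S ∈ 𝒱} π(S)·P_T(S, S') = π(S') for all S' ∈ 𝒱, then π = π_T. -/
open Finset

variable {V : Type*} [Fintype V] [DecidableEq V]

/-- The collection of sets obtained from `S` by adding one new vertex. -/
def N1 (S : Finset V) : Finset (Finset V) := Sᶜ.image fun x => insert x S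

/-- The collection of sets obtained from `S` by removing one vertex. -/
def N2 (S : Finset V) : Finset (Finset V) := S.image fun x => S.erase x

/-- The collection of sets obtained from `S` by swapping one vertex of `S`
with one vertex outside `S`. -/
def N3 (S : Finset V) : Finset (Finset V) :=
  (Sᶜ ×ˢ S).image fun p => (insert p.1 S).erase p.2

/-- Off-diagonal transition probabilities of the Metropolis chain. -/
noncomputable def Poff (C : Finset V → ℝ) (T : ℝ) (S S' : Finset V) : ℝ :=
  if S' ∈ N1 S ∪ N2 S then
    (2 / (3 * (Fintype.card V : ℝ))) * min (Real.exp ((C S - C S') / T)) 1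
  else if S' ∈ N3 S then
    (1 / (3 * (S.card : ℝ) * ((Fintype.card V : ℝ) - (S.card : ℝ)))) *
      min (Real.exp ((C S - C S') / T)) 1
  else 0

/-- The transition matrix `P_T` of the Metropolis chain: off the diagonal it is
given by `Poff`, and the diagonal entry is `1` minus the sum of the off-diagonal
entries in the row. -/
noncomputable def Ptrans (C : Finset V → ℝ) (T : ℝ) (S S' : Finset V) : ℝ :=
  if S' = S then 1 - ∑ S'' ∈ univ.erase S, Poff C T S S''
  else Poff C T S S'

/-- The Gibbs distribution at temperature `T` for the cost function `C`. -/
noncomputable def gibbs (C : Finset V → ℝ) (T : ℝ) (S : Finset V) : ℝ :=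
  Real.exp (-C S / T) / ∑ S₁ : Finset V, Real.exp (-C S₁ / T)

/-! The Metropolis rule makes `P_T` reversible for `π_T`, since
`e^{-a/T} min(e^{(a-b)/T}, 1) = min(e^{-a/T}, e^{-b/T})` is symmetric in `a, b`. Hence for a
stationary `π` the ratio `π / π_T` is `P_T`-harmonic. Adding and removing single vertices
connects every set to `∅` and back with positive probability, so by the maximum principle a
harmonic function is constant, and the normalisation forces the constant to be `1`. -/

namespace Matrix

variable {n : Type*} [Fintype n] {P : Matrix n n ℝ}

theorem apply_eq_of_mulVec_eq_self_of_isMax [DecidableEq n] (hP : P ∈ rowStochastic ℝ n)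
    {f : n → ℝ} (hf : P *ᵥ f = f) {a b : n} (hmax : ∀ c, f c ≤ f a) (hab : 0 < P a b) :
    f b = f a := by
  have hzero : ∑ c, P a c * (f a - f c) = 0 := by
    have hfa : ∑ c, P a c * f c = f a := congrFun hf a
    simp only [mul_sub, sum_sub_distrib, ← sum_mul, sum_row_of_mem_rowStochastic hP, hfa]
    ring
  have hterm := (sum_eq_zero_iff_of_nonneg fun c _ =>
    mul_nonneg (nonneg_of_mem_rowStochastic hP) (sub_nonneg.2 (hmax c))).1 hzero b (mem_univ b)
  linarith [(mul_eq_zero.1 hterm).resolve_left hab.ne']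

theorem apply_eq_apply_of_mulVec_eq_self [DecidableEq n] (hP : P ∈ rowStochastic ℝ n)
    (hirr : ∀ a b, Relation.ReflTransGen (fun a b => 0 < P a b) a b) {f : n → ℝ}
    (hf : P *ᵥ f = f) (a b : n) : f a = f b := by
  have : Nonempty n := ⟨a⟩
  obtain ⟨c, hc⟩ := Finite.exists_max f
  have hmax : ∀ d, f d = f c := fun d => by
    induction hirr c d with
    | refl => rfl
    | tail _ hde ih =>
      exact (apply_eq_of_mulVec_eq_self_of_isMax hP hf (fun y => (hc y).trans ih.ge) hde).trans ih
  rw [hmax a, hmax b]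

theorem mulVec_div_eq_self_of_vecMul_eq_self {μ ν : n → ℝ} (hμ : ∀ a, 0 < μ a)
    (hrev : ∀ a b, μ a * P a b = μ b * P b a) (hν : ν ᵥ* P = ν) :
    P *ᵥ (ν / μ) = ν / μ := by
  funext a
  have key : μ a * (P *ᵥ (ν / μ)) a = ν a :=
    calc μ a * (P *ᵥ (ν / μ)) a = ∑ b, μ a * P a b * (ν b / μ b) := by
          simp only [mulVec, dotProduct, mul_sum, Pi.div_apply, mul_assoc]
      _ = ∑ b, ν b * P b a := sum_congr rfl fun b _ => by
          rw [hrev]; field_simp [(hμ b).ne']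
      _ = ν a := congrFun hν a
  exact eq_div_of_mul_eq (hμ a).ne' (by rw [mul_comm, key])

theorem eq_of_vecMul_eq_self_of_reversible [DecidableEq n] (hP : P ∈ rowStochastic ℝ n)
    (hirr : ∀ a b, Relation.ReflTransGen (fun a b => 0 < P a b) a b) {μ ν : n → ℝ}
    (hμ : ∀ a, 0 < μ a) (hrev : ∀ a b, μ a * P a b = μ b * P b a) (hν : ν ᵥ* P = ν)
    (hsum : ∑ a, ν a = ∑ a, μ a) : ν = μ := by
  funext a
  have hconst := apply_eq_apply_of_mulVec_eq_self hP hirr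
    (mulVec_div_eq_self_of_vecMul_eq_self hμ hrev hν) a
  have hν_eq : ∀ b, ν b = (ν / μ) a * μ b := fun b => by
    rw [hconst b, Pi.div_apply, div_mul_cancel₀ _ (hμ b).ne']
  have hμ_sum : 0 < ∑ b, μ b := sum_pos (fun b _ => hμ b) ⟨a, mem_univ a⟩
  have hratio : (ν / μ) a * ∑ b, μ b = 1 * ∑ b, μ b := by
    rw [mul_sum, one_mul, ← hsum]
    exact (sum_congr rfl fun b _ => hν_eq b).symm
  exact (div_eq_one_iff_eq (hμ a).ne').1 (mul_right_cancel₀ hμ_sum.ne' hratio)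

end Matrix

theorem natCast_mul_div_mul_le {m : ℕ} {x a b : ℝ} (hmx : (m : ℝ) ≤ x) (ha : 0 ≤ a)
    (hb : 0 < b) : m * (a / (b * x)) ≤ a / b := by
  rcases ((Nat.cast_nonneg m).trans hmx).eq_or_lt with hx | hx
  · rw [le_antisymm (hx ▸ hmx) (Nat.cast_nonneg m), zero_mul]
    positivity
  · calc m * (a / (b * x)) ≤ x * (a / (b * x)) := by gcongr
      _ = a / b := by field_simp

section Metropolis

variable {S S' : Finset V}

theorem mem_N1 : S' ∈ N1 S ↔ ∃ x ∉ S, insert x S = S' := by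
  simp [N1]

omit [Fintype V] in
theorem mem_N2 : S' ∈ N2 S ↔ ∃ x ∈ S, S.erase x = S' := by
  simp [N2]

theorem mem_N3 : S' ∈ N3 S ↔ ∃ x x', x ∉ S ∧ x' ∈ S ∧ (insert x S).erase x' = S' := by
  simp [N3, and_assoc]

theorem mem_N1_iff_mem_N2 : S' ∈ N1 S ↔ S ∈ N2 S' := by
  constructor
  · intro h
    obtain ⟨x, hx, rfl⟩ := mem_N1.1 h
    exact mem_N2.2 ⟨x, mem_insert_self x S, erase_insert hx⟩
  · intro h
    obtain ⟨x, hx, rfl⟩ := mem_N2.1 h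
    exact mem_N1.2 ⟨x, notMem_erase x S', insert_erase hx⟩

theorem mem_N1_union_N2_comm : S' ∈ N1 S ∪ N2 S ↔ S ∈ N1 S' ∪ N2 S' := by
  rw [mem_union, mem_union, mem_N1_iff_mem_N2, ← mem_N1_iff_mem_N2 (S := S'), or_comm]

theorem mem_N3_comm : S' ∈ N3 S ↔ S ∈ N3 S' := by
  suffices h : ∀ {S S' : Finset V}, S' ∈ N3 S → S ∈ N3 S' from ⟨h, h⟩
  intro S S' h
  obtain ⟨x, x', hx, hx', rfl⟩ := mem_N3.1 h
  have hxx' : x ≠ x' := fun he => hx (he ▸ hx')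
  refine mem_N3.2 ⟨x', x, notMem_erase x' _, mem_erase.2 ⟨hxx', mem_insert_self x S⟩, ?_⟩
  rw [insert_erase (mem_insert_of_mem hx'), erase_insert hx]

theorem card_of_mem_N1 (h : S' ∈ N1 S) : S'.card = S.card + 1 := by
  obtain ⟨x, hx, rfl⟩ := mem_N1.1 h
  exact card_insert_of_notMem hx

theorem card_of_mem_N3 (h : S' ∈ N3 S) : S'.card = S.card := by
  obtain ⟨x, x', hx, hx', rfl⟩ := mem_N3.1 h
  rw [card_erase_of_mem (mem_insert_of_mem hx'), card_insert_of_notMem hx, Nat.add_sub_cancel]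

theorem ne_of_mem_N1_union_N2 (h : S' ∈ N1 S ∪ N2 S) : S' ≠ S := by
  rintro rfl
  rcases mem_union.1 h with h | h
  · have := card_of_mem_N1 h; omega
  · have := card_of_mem_N1 (mem_N1_iff_mem_N2.2 h); omega

theorem nonempty_of_mem_N1_union_N2 (h : S' ∈ N1 S ∪ N2 S) : Nonempty V := by
  rcases mem_union.1 h with h | h
  · obtain ⟨x, -⟩ := mem_N1.1 h; exact ⟨x⟩
  · obtain ⟨x, -⟩ := mem_N2.1 h; exact ⟨x⟩

theorem card_N1_union_N2_le (S : Finset V) : (N1 S ∪ N2 S).card ≤ Fintype.card V := by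
  have h1 : (N1 S).card ≤ Fintype.card V - S.card := card_image_le.trans (card_compl S).le
  have h2 : (N2 S).card ≤ S.card := card_image_le
  have := card_union_le (N1 S) (N2 S)
  have := card_le_univ S
  omega

theorem card_N3_le (S : Finset V) : (N3 S).card ≤ S.card * (Fintype.card V - S.card) :=
  card_image_le.trans (by rw [card_product, card_compl, mul_comm])

variable (C : Finset V → ℝ) (T : ℝ)

omit [DecidableEq V] in
theorem coeff_N3_nonneg (S : Finset V) :
    0 ≤ 1 / (3 * (S.card : ℝ) * ((Fintype.card V : ℝ) - S.card)) := by
  have : (S.card : ℝ) ≤ Fintype.card V := by exact_mod_cast card_le_univ S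
  have : 0 ≤ (Fintype.card V : ℝ) - S.card := by linarith
  positivity

theorem Poff_nonneg (S S' : Finset V) : 0 ≤ Poff C T S S' := by
  have := coeff_N3_nonneg S
  unfold Poff
  split_ifs <;> positivity

theorem Poff_le (S S' : Finset V) :
    Poff C T S S' ≤ (if S' ∈ N1 S ∪ N2 S then 2 / (3 * (Fintype.card V : ℝ)) else 0) +
      (if S' ∈ N3 S then 1 / (3 * (S.card : ℝ) * ((Fintype.card V : ℝ) - S.card)) else 0) :=
    by
  have ha : 0 ≤ 2 / (3 * (Fintype.card V : ℝ)) := by positivity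
  have hc := coeff_N3_nonneg S
  have hmin := min_le_right (Real.exp ((C S - C S') / T)) 1
  unfold Poff
  split_ifs <;> linarith [mul_le_of_le_one_right ha hmin, mul_le_of_le_one_right hc hmin]

theorem sum_Poff_le_one (S : Finset V) : ∑ S' ∈ univ.erase S, Poff C T S S' ≤ 1 := by
  set n := Fintype.card V
  set k := S.card
  have hk : ((n - k : ℕ) : ℝ) = n - k := Nat.cast_sub (card_le_univ S)
  have hN3 : ((N3 S).card : ℝ) ≤ k * (n - k) := by
    rw [← hk]; exact_mod_cast card_N3_le S
  calc ∑ S' ∈ univ.erase S, Poff C T S S'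
      ≤ ∑ S', Poff C T S S' :=
        sum_le_sum_of_subset_of_nonneg (erase_subset _ _) fun _ _ _ => Poff_nonneg C T S _
    _ ≤ ∑ S', ((if S' ∈ N1 S ∪ N2 S then 2 / (3 * (n : ℝ)) else 0) +
          (if S' ∈ N3 S then 1 / (3 * (k : ℝ) * ((n : ℝ) - k)) else 0)) :=
        sum_le_sum fun S' _ => Poff_le C T S S'
    _ = (N1 S ∪ N2 S).card * (2 / (3 * n)) + (N3 S).card * (1 / (3 * (k * (n - k)))) := by
        rw [sum_add_distrib, sum_ite_mem, sum_ite_mem, univ_inter, univ_inter, sum_const,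
          sum_const, nsmul_eq_mul, nsmul_eq_mul, mul_assoc 3]
    _ ≤ 2 / 3 + 1 / 3 := add_le_add
        (natCast_mul_div_mul_le (by exact_mod_cast card_N1_union_N2_le S) zero_le_two three_pos)
        (natCast_mul_div_mul_le hN3 zero_le_one three_pos)
    _ = 1 := by norm_num

theorem Ptrans_mem_rowStochastic : Ptrans C T ∈ Matrix.rowStochastic ℝ (Finset V) := by
  refine Matrix.mem_rowStochastic_iff_sum.2 ⟨fun S S' => ?_, fun S => ?_⟩
  · unfold Ptrans
    split_ifs
    · exact sub_nonneg.2 (sum_Poff_le_one C T S)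
    · exact Poff_nonneg C T S S'
  · have hoff : ∀ S' ∈ univ.erase S, Ptrans C T S S' = Poff C T S S' := fun S' hS' =>
      if_neg (ne_of_mem_erase hS')
    rw [← add_sum_erase _ _ (mem_univ S), sum_congr rfl hoff, Ptrans, if_pos rfl]
    ring

theorem Ptrans_pos_of_mem (h : S' ∈ N1 S ∪ N2 S) : 0 < Ptrans C T S S' := by
  have := nonempty_of_mem_N1_union_N2 h
  rw [Ptrans, if_neg (ne_of_mem_N1_union_N2 h), Poff, if_pos h]
  exact mul_pos (by positivity) (lt_min (Real.exp_pos _) one_pos)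

theorem reflTransGen_Ptrans_pos (S S' : Finset V) :
    Relation.ReflTransGen (fun A B => 0 < Ptrans C T A B) S S' := by
  have down : ∀ S : Finset V, Relation.ReflTransGen (fun A B => 0 < Ptrans C T A B) S ∅ := by
    intro S
    induction S using Finset.induction_on with
    | empty => rfl
    | insert x S hx ih =>
      exact .head (Ptrans_pos_of_mem C T
        (mem_union_right _ (mem_N2.2 ⟨x, mem_insert_self x S, erase_insert hx⟩))) ih
  have up : ∀ S : Finset V, Relation.ReflTransGen (fun A B => 0 < Ptrans C T A B) ∅ S := by
    intro S
    induction S using Finset.induction_on with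
    | empty => rfl
    | insert x S hx ih =>
      exact .tail ih (Ptrans_pos_of_mem C T (mem_union_left _ (mem_N1.2 ⟨x, hx, rfl⟩)))
  exact (down S).trans (up S')

theorem exp_mul_min_exp_comm (a b : ℝ) :
    Real.exp (-a / T) * min (Real.exp ((a - b) / T)) 1 =
      Real.exp (-b / T) * min (Real.exp ((b - a) / T)) 1 := by
  simp only [mul_min_of_nonneg _ _ (Real.exp_pos _).le, ← Real.exp_add, mul_one, ← add_div]
  ring_nf
  exact min_comm _ _

theorem exp_mul_Poff_comm (S S' : Finset V) :
    Real.exp (-C S / T) * Poff C T S S' = Real.exp (-C S' / T) * Poff C T S' S := by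
  unfold Poff
  simp only [mem_N1_union_N2_comm (S := S) (S' := S'), mem_N3_comm (S := S) (S' := S')]
  split_ifs with h12 h3
  · linear_combination 2 / (3 * (Fintype.card V : ℝ)) * exp_mul_min_exp_comm T (C S) (C S')
  · rw [card_of_mem_N3 h3]
    linear_combination 1 / (3 * (S'.card : ℝ) * ((Fintype.card V : ℝ) - S'.card)) *
      exp_mul_min_exp_comm T (C S) (C S')
  · ring

theorem gibbs_mul_Ptrans_comm (S S' : Finset V) :
    gibbs C T S * Ptrans C T S S' = gibbs C T S' * Ptrans C T S' S := by
  by_cases h : S' = S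
  · rw [h]
  · rw [Ptrans, Ptrans, if_neg h, if_neg (Ne.symm h), gibbs, gibbs, div_mul_eq_mul_div,
      div_mul_eq_mul_div, exp_mul_Poff_comm]

omit [DecidableEq V] in
theorem gibbs_pos (S : Finset V) : 0 < gibbs C T S :=
  div_pos (Real.exp_pos _) (sum_pos (fun _ _ => Real.exp_pos _) univ_nonempty)

omit [DecidableEq V] in
theorem sum_gibbs : ∑ S : Finset V, gibbs C T S = 1 := by
  unfold gibbs
  rw [← sum_div]
  exact div_self (sum_pos (fun _ _ => Real.exp_pos _) univ_nonempty).ne'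

end Metropolis

theorem gibbs_unique_stationary_general (C : Finset V → ℝ) (T : ℝ) (π : Finset V → ℝ)
    (hsum : ∑ S : Finset V, π S = 1)
    (hstat : ∀ S' : Finset V, ∑ S : Finset V, π S * Ptrans C T S S' = π S') :
    π = gibbs C T :=
  Matrix.eq_of_vecMul_eq_self_of_reversible (Ptrans_mem_rowStochastic C T)
    (reflTransGen_Ptrans_pos C T) (gibbs_pos C T) (gibbs_mul_Ptrans_comm C T) (funext hstat)
    (by rw [hsum, sum_gibbs])

/-- The Gibbs distribution is the unique stationary probability
distribution of the chain `P_T`. -/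
theorem gibbs_unique_stationary (hn : 1 ≤ Fintype.card V) (C : Finset V → ℝ) (T : ℝ)
    (hT : 0 < T) (π : Finset V → ℝ)
    (hrange : ∀ S : Finset V, π S ∈ Set.Icc (0 : ℝ) 1)
    (hsum : ∑ S : Finset V, π S = 1)
    (hstat : ∀ S' : Finset V, ∑ S : Finset V, π S * Ptrans C T S S' = π S') :
    π = gibbs C T :=
  gibbs_unique_stationary_general C T π hsum hstat
end

section
/- Proposition (zero forcing characterization of strong structural controllability): For a pattern matrix A ∈ {0, ×}^{n×n} and S ⊆ {x₁, …, x_n}, the structured pair (A, B(S)) is strongly structurally controllable if and only if (1) S is a zero forcing set of G(A), and (2) there exists a chronological list of forces from S in G(A_×) whose final black set is all of V and which contains no force of the form x → x for any vertex x with A_{xx} = ×. -/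
open Finset
open scoped Classical

/-- One-step forcing operator of the zero forcing process in a loop directed
graph with edge relation `E` (`E u v` means there is an edge from `u` to `v`,
i.e. `v` is an out-neighbor of `u`): to the black set `B` we add every white
vertex `v` that is the unique out-neighbor, not in `B`, of some vertex `u`. -/
noncomputable def forceStep {V : Type*} [Fintype V] (E : V → V → Prop)
    (B : Finset V) : Finset V :=
  B ∪ univ.filter fun v => v ∉ B ∧ ∃ u, E u v ∧ ∀ w, E u w → w ∉ B → w = v

/-- The zero forcing closure of `S`: iterate the one-step forcing operator
`|V|` times. -/
noncomputable def zfClosure {V : Type*} [Fintype V] (E : V → V → Prop)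
    (S : Finset V) : Finset V :=
  (forceStep E)^[Fintype.card V] S

/-- One-step forcing operator of the restricted zero forcing process:
a force `u → v` with `u = v` is forbidden whenever `forbid v` holds. -/
noncomputable def forceStepR {V : Type*} [Fintype V] (E : V → V → Prop)
    (forbid : V → Prop) (B : Finset V) : Finset V :=
  B ∪ univ.filter fun v => v ∉ B ∧
    ∃ u, E u v ∧ (∀ w, E u w → w ∉ B → w = v) ∧ ¬(u = v ∧ forbid v)

/-- The restricted zero forcing closure. -/
noncomputable def zfClosureR {V : Type*} [Fintype V] (E : V → V → Prop)
    (forbid : V → Prop) (S : Finset V) : Finset V :=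
  (forceStepR E forbid)^[Fintype.card V] S

/-- `ValidForce E B u v`: from the black set `B`, vertex `u` may force the white
vertex `v`, i.e. `v ∉ B` and `v` is the unique out-neighbor of `u` not in `B`. -/
def ValidForce {V : Type*} (E : V → V → Prop) (B : Finset V) (u v : V) : Prop :=
  v ∉ B ∧ E u v ∧ ∀ w, E u w → w ∉ B → w = v

/-- The black set obtained from `S` after applying the forces in the list `l`
(each list entry `(u, v)` records the force `u → v`). -/
noncomputable def chainSet {V : Type*} [DecidableEq V] (S : Finset V)
    (l : List (V × V)) : Finset V :=
  S ∪ (l.map Prod.snd).toFinset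

/-- `l` is a chronological list of forces from `S` in the graph with edge
relation `E`: each force in the list is valid with respect to the black set
produced by the initial set `S` together with the preceding forces. -/
def IsChronList {V : Type*} [DecidableEq V] (E : V → V → Prop) (S : Finset V)
    (l : List (V × V)) : Prop :=
  ∀ k : Fin l.length, ValidForce E (chainSet S (l.take k)) (l.get k).1 (l.get k).2

/-- Kalman controllability: the controllability matrix
`[B, AB, …, A^{n−1}B]` has full row rank `n`. -/
def Controllable {n m : ℕ} (A : Matrix (Fin n) (Fin n) ℝ)
    (B : Matrix (Fin n) (Fin m) ℝ) : Prop :=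
  (Matrix.of fun i (p : Fin n × Fin m) => (A ^ (p.1 : ℕ) * B) i p.2).rank = n

/-- `(At, Bt)` is a numerical realization of the pattern pair `(A, B)`
(patterns are modelled as `Prop`-valued matrices, `A i j` meaning `A_{ij} = ×`). -/
def IsRealization {n m : ℕ} (A : Fin n → Fin n → Prop) (B : Fin n → Fin m → Prop)
    (At : Matrix (Fin n) (Fin n) ℝ) (Bt : Matrix (Fin n) (Fin m) ℝ) : Prop :=
  (∀ i j, At i j ≠ 0 ↔ A i j) ∧ (∀ i j, Bt i j ≠ 0 ↔ B i j)

/-- Strong structural controllability: every numerical realization of the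
pattern pair `(A, B)` is controllable. -/
def SControllable {n m : ℕ} (A : Fin n → Fin n → Prop)
    (B : Fin n → Fin m → Prop) : Prop :=
  ∀ (At : Matrix (Fin n) (Fin n) ℝ) (Bt : Matrix (Fin n) (Fin m) ℝ),
    IsRealization A B At Bt → Controllable At Bt

/-- The dedicated-input pattern matrix `B(S)`: it has `S.card` columns, one per
vertex of `S`, and the column corresponding to `x_i ∈ S` is the pattern
standard basis vector `e_i`. -/
def BS {n : ℕ} (S : Finset (Fin n)) : Fin n → Fin S.card → Prop :=
  fun i j => (S.orderIsoOfFin rfl j : Fin n) = i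

/-!
By the Popov–Belevitch–Hautus test, a real realization `(Ã, B̃)` fails to be controllable iff
some nonzero complex `w` satisfies `w Ã = μ w` and `w B̃ = 0`; with dedicated inputs the second
condition says that `w` vanishes on `S`. The zero set of such a `w` is closed under forcing: if
the column `u` of `Ã - μ I` has, outside the zero set, its only nonzero entry at `v`, then
`w_v = 0`. For `μ = 0` the column patterns of `Ã` are those of `G(A)`; for `μ ≠ 0` they are those
of `G(A_×)`, except that `Ã_uu - μ` may vanish when `A_uu = ×`, which is why such self-forces are
excluded.

Conversely, if either forcing process stalls at a black set `R ≠ V`, every column has outside `R`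
none or at least two out-neighbours (or, for `G(A_×)`, only a forbidden self-force). Nonzero
entries can then be chosen so that each column sums over `Rᶜ` to `μ [u ∉ R]` with `μ = 0`,
resp. `μ = 1`; the indicator of `Rᶜ` is then a left eigenvector of the realization annihilating
`B(S)`.
-/

open Matrix

section Forcing

variable {V : Type*} {E : V → V → Prop} {forbid : V → Prop}

theorem ValidForce.mono {B B' : Finset V} {u v : V} (h : ValidForce E B u v) (hBB' : B ⊆ B')
    (hv : v ∉ B') : ValidForce E B' u v :=
  ⟨hv, h.2.1, fun w hw hwB' => h.2.2 w hw fun hwB => hwB' (hBB' hwB)⟩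

section Closure

variable [Fintype V]

theorem validForce_iff [DecidableEq V] {B : Finset V} {u v : V} [DecidablePred (E u)] :
    ValidForce E B u v ↔ Bᶜ.filter (E u) = {v} := by
  simp only [ValidForce, eq_singleton_iff_unique_mem, mem_filter, mem_compl]
  tauto

theorem zfClosure_eq_zfClosureR (E : V → V → Prop) (S : Finset V) :
    zfClosure E S = zfClosureR E (fun _ => False) S := by
  have : forceStep E = forceStepR E (fun _ => False) := by
    ext B v
    simp [forceStep, forceStepR]
  rw [zfClosure, zfClosureR, this]

theorem mem_forceStepR {B : Finset V} {v : V} :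
    v ∈ forceStepR E forbid B ↔ v ∈ B ∨ ∃ u, ValidForce E B u v ∧ ¬(u = v ∧ forbid v) := by
  simp only [forceStepR, ValidForce, mem_union, mem_filter, mem_univ, true_and]
  grind

theorem iterate_card_fixed {f : Finset V → Finset V} (hf : ∀ B, B ⊆ f B) (S : Finset V) :
    f (f^[Fintype.card V] S) = f^[Fintype.card V] S := by
  have key : ∀ k, f (f^[k] S) = f^[k] S ∨ k ≤ (f^[k] S).card := by
    intro k
    induction k with
    | zero => exact Or.inr (Nat.zero_le _)
    | succ k ih =>
      rw [Function.iterate_succ_apply']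
      by_cases hfix : f (f^[k] S) = f^[k] S
      · exact Or.inl (by rw [hfix, hfix])
      · refine Or.inr (ih.resolve_left hfix |>.trans_lt (card_lt_card ?_))
        exact (hf _).ssubset_of_ne (Ne.symm hfix)
  refine (key _).elim id fun hcard => ?_
  rw [eq_univ_of_card _ (hcard.antisymm (card_le_univ _)).symm]
  exact eq_univ_of_forall fun x => hf univ (mem_univ x)

theorem subset_zfClosureR (S : Finset V) : S ⊆ zfClosureR E forbid S :=
  monotone_nat_of_le_succ (f := fun k => (forceStepR E forbid)^[k] S)
    (fun k => by simp only [Function.iterate_succ_apply']; exact subset_union_left) (Nat.zero_le _)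

theorem ValidForce.eq_of_zfClosureR {S : Finset V} {u v : V}
    (h : ValidForce E (zfClosureR E forbid S) u v) : u = v ∧ forbid v := by
  by_contra hforb
  have hv : v ∈ forceStepR E forbid (zfClosureR E forbid S) :=
    mem_forceStepR.2 (Or.inr ⟨u, h, hforb⟩)
  rw [zfClosureR, iterate_card_fixed (f := forceStepR E forbid) (fun _ => subset_union_left)] at hv
  exact h.1 hv

end Closure

section Chron

variable [DecidableEq V]

theorem chainSet_nil (S : Finset V) : chainSet S ([] : List (V × V)) = S := by
  simp [chainSet]

theorem chainSet_append_singleton (S : Finset V) (l : List (V × V)) (p : V × V) :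
    chainSet S (l ++ [p]) = insert p.2 (chainSet S l) := by
  ext x
  simp [chainSet]

theorem isChronList_append_singleton {S : Finset V} {l : List (V × V)} {p : V × V} :
    IsChronList E S (l ++ [p]) ↔ IsChronList E S l ∧ ValidForce E (chainSet S l) p.1 p.2 := by
  constructor
  · intro h
    refine ⟨fun k => ?_, ?_⟩
    · simpa [List.take_append_of_le_length k.isLt.le, List.getElem_append_left k.isLt]
        using h ⟨k, by simp⟩
    · simpa using h ⟨l.length, by simp⟩
  · rintro ⟨hl, hp⟩ ⟨k, hk⟩
    rw [List.length_append, List.length_singleton] at hk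
    rcases Nat.lt_succ_iff_lt_or_eq.1 hk with hk | rfl
    · simpa [List.take_append_of_le_length hk.le, List.getElem_append_left hk] using hl ⟨k, hk⟩
    · simpa using hp

def IsChronListAvoiding (E : V → V → Prop) (forbid : V → Prop) (S : Finset V)
    (l : List (V × V)) : Prop :=
  IsChronList E S l ∧ ∀ p ∈ l, ¬(p.1 = p.2 ∧ forbid p.2)

theorem isChronListAvoiding_nil (S : Finset V) : IsChronListAvoiding E forbid S [] :=
  ⟨fun k => k.elim0, by simp⟩

theorem isChronListAvoiding_append_singleton {S : Finset V} {l : List (V × V)} {u v : V} :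
    IsChronListAvoiding E forbid S (l ++ [(u, v)]) ↔
      IsChronListAvoiding E forbid S l ∧ ValidForce E (chainSet S l) u v ∧ ¬(u = v ∧ forbid v) := by
  simp only [IsChronListAvoiding, isChronList_append_singleton, List.mem_append,
    List.mem_singleton, or_imp, forall_and, forall_eq]
  tauto

theorem exists_isChronListAvoiding_union {S B : Finset V} {l : List (V × V)}
    (hl : IsChronListAvoiding E forbid S l) (hlB : chainSet S l = B) {T : Finset V}
    (hT : ∀ v ∈ T, ∃ u, ValidForce E B u v ∧ ¬(u = v ∧ forbid v)) :
    ∃ l', IsChronListAvoiding E forbid S l' ∧ chainSet S l' = B ∪ T := by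
  induction T using Finset.induction_on with
  | empty => exact ⟨l, hl, by rw [hlB, union_empty]⟩
  | insert a T haT ih =>
    obtain ⟨l', hl', hl'B⟩ := ih fun v hv => hT v (mem_insert_of_mem hv)
    obtain ⟨u, hu, hforb⟩ := hT a (mem_insert_self a T)
    have ha : a ∉ chainSet S l' := by
      rw [hl'B, mem_union, not_or]
      exact ⟨hu.1, haT⟩
    refine ⟨l' ++ [(u, a)], isChronListAvoiding_append_singleton.2
      ⟨hl', hu.mono (hl'B ▸ subset_union_left) ha, hforb⟩, ?_⟩
    rw [chainSet_append_singleton, hl'B, union_insert]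

theorem exists_isChronListAvoiding_zfClosureR [Fintype V] (S : Finset V) :
    ∃ l, IsChronListAvoiding E forbid S l ∧ chainSet S l = zfClosureR E forbid S := by
  suffices ∀ m, ∃ l, IsChronListAvoiding E forbid S l ∧
      chainSet S l = (forceStepR E forbid)^[m] S from this _
  intro m
  induction m with
  | zero => exact ⟨[], isChronListAvoiding_nil S, chainSet_nil S⟩
  | succ m ih =>
    obtain ⟨l, hl, hlB⟩ := ih
    obtain ⟨l', hl', hl'B⟩ := exists_isChronListAvoiding_union hl hlB
      (T := univ.filter fun v => ∃ u, ValidForce E _ u v ∧ ¬(u = v ∧ forbid v))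
      fun v hv => (mem_filter.1 hv).2
    refine ⟨l', hl', ?_⟩
    ext v
    simp [hl'B, Function.iterate_succ_apply', mem_forceStepR]

def ForceClosed (E : V → V → Prop) (forbid : V → Prop) (Z : Set V) : Prop :=
  ∀ (B : Finset V) (u v : V), ValidForce E B u v → ¬(u = v ∧ forbid v) → ↑B ⊆ Z → v ∈ Z

theorem ForceClosed.chainSet_subset {Z : Set V} (hZ : ForceClosed E forbid Z) {S : Finset V}
    (hS : ↑S ⊆ Z) {l : List (V × V)} (hl : IsChronListAvoiding E forbid S l) :
    ↑(chainSet S l) ⊆ Z := by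
  induction l using List.reverseRecOn with
  | nil => rwa [chainSet_nil]
  | append_singleton l p ih =>
    obtain ⟨hl, hp, hforb⟩ := isChronListAvoiding_append_singleton.1 hl
    have hlZ := ih hl
    rw [chainSet_append_singleton, coe_insert]
    exact Set.insert_subset (hZ _ _ _ hp hforb hlZ) hlZ

theorem ForceClosed.zfClosureR_subset [Fintype V] {Z : Set V} (hZ : ForceClosed E forbid Z)
    {S : Finset V} (hS : ↑S ⊆ Z) : ↑(zfClosureR E forbid S) ⊆ Z := by
  obtain ⟨l, hl, hlS⟩ := exists_isChronListAvoiding_zfClosureR (E := E) (forbid := forbid) S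
  exact hlS ▸ hZ.chainSet_subset hS hl

end Chron

end Forcing

section LinearAlgebra

variable {K : Type*} [Field K] {ι κ : Type*} [Fintype ι]

theorem Matrix.rank_eq_card_iff_forall_vecMul_eq_zero [Fintype κ] (M : Matrix ι κ K) :
    M.rank = Fintype.card ι ↔ ∀ z : ι → K, z ᵥ* M = 0 → z = 0 := by
  rw [M.rank_eq_finrank_span_row, eq_comm, ← Set.finrank,
    ← linearIndependent_iff_card_eq_finrank_span, Fintype.linearIndependent_iff]
  simp only [vecMul_eq_sum, funext_iff]
  rfl

theorem controllable_iff {n m : ℕ} (A : Matrix (Fin n) (Fin n) ℝ) (B : Matrix (Fin n) (Fin m) ℝ) :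
    Controllable A B ↔ ∀ z : Fin n → ℝ, (∀ k < n, z ᵥ* (A ^ k * B) = 0) → z = 0 := by
  have h := rank_eq_card_iff_forall_vecMul_eq_zero
    (of fun i (p : Fin n × Fin m) => (A ^ (p.1 : ℕ) * B) i p.2)
  rw [Fintype.card_fin] at h
  rw [Controllable, h]
  refine forall_congr' fun z => imp_congr_left ⟨fun h k hk => ?_, fun h => ?_⟩
  · ext j
    exact congrFun h (⟨k, hk⟩, j)
  · ext ⟨k, j⟩
    exact congrFun (h k k.isLt) j

theorem vecMul_pow_mul_eq_zero_of_lt_card [DecidableEq ι] [Nonempty ι] {A : Matrix ι ι K}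
    {B : Matrix ι κ K} {z : ι → K} (hz : ∀ k < Fintype.card ι, z ᵥ* (A ^ k * B) = 0) (k : ℕ) :
    z ᵥ* (A ^ k * B) = 0 := by
  have hdeg : (Polynomial.X ^ k %ₘ A.charpoly).natDegree < Fintype.card ι := by
    rw [← A.charpoly_natDegree_eq_dim]
    refine Polynomial.natDegree_modByMonic_lt _ A.charpoly_monic fun h => ?_
    have hcard := A.charpoly_natDegree_eq_dim
    rw [h, Polynomial.natDegree_one] at hcard
    exact Fintype.card_ne_zero hcard.symm
  -- Cayley–Hamilton: `A ^ k` is a polynomial in `A` of degree `< card ι`.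
  rw [A.pow_eq_aeval_mod_charpoly, Polynomial.aeval_eq_sum_range' hdeg, Matrix.sum_mul,
    vecMul_sum]
  exact Finset.sum_eq_zero fun i hi => by
    rw [smul_mul, vecMul_smul, hz i (Finset.mem_range.mp hi), smul_zero]

theorem exists_left_eigenvector_of_vecMul_pow_mul_eq_zero [IsAlgClosed K] [DecidableEq ι]
    (A : Matrix ι ι K) (B : Matrix ι κ K) {z : ι → K} (hz : z ≠ 0)
    (hzAB : ∀ k < Fintype.card ι, z ᵥ* (A ^ k * B) = 0) :
    ∃ (w : ι → K) (μ : K), w ≠ 0 ∧ w ᵥ* A = μ • w ∧ w ᵥ* B = 0 := by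
  have : Nonempty ι := by
    by_contra h
    exact hz (funext fun i => (h ⟨i⟩).elim)
  -- the largest `A`-invariant space of left annihilators of `B`; it contains `z`
  let W : Submodule K (ι → K) := ⨅ k : ℕ, LinearMap.ker (A ^ k * B).vecMulLinear
  have mem_W {w : ι → K} : w ∈ W ↔ ∀ k : ℕ, w ᵥ* (A ^ k * B) = 0 := by
    simp [W, Submodule.mem_iInf]
  have hAW : ∀ w ∈ W, A.vecMulLinear w ∈ W := fun w hw => mem_W.2 fun k => by
    rw [vecMulLinear_apply, vecMul_vecMul, ← Matrix.mul_assoc, ← pow_succ']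
    exact mem_W.1 hw (k + 1)
  have : Nontrivial W :=
    ⟨⟨⟨z, mem_W.2 (vecMul_pow_mul_eq_zero_of_lt_card hzAB)⟩, 0, fun h => hz congr(($h).1)⟩⟩
  obtain ⟨μ, hμ⟩ := Module.End.exists_eigenvalue (A.vecMulLinear.restrict hAW)
  obtain ⟨w, hw⟩ := hμ.exists_hasEigenvector
  refine ⟨w, μ, fun h => hw.2 (Subtype.ext h), congr(($hw.apply_eq_smul).1), ?_⟩
  simpa using mem_W.1 w.2 0

theorem exists_complex_left_eigenvector_of_not_controllable {n m : ℕ}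
    {A : Matrix (Fin n) (Fin n) ℝ} {B : Matrix (Fin n) (Fin m) ℝ} (h : ¬ Controllable A B) :
    ∃ (w : Fin n → ℂ) (μ : ℂ), w ≠ 0 ∧ w ᵥ* A.map (↑) = μ • w ∧ w ᵥ* B.map (↑) = 0 := by
  rw [controllable_iff] at h
  push Not at h
  obtain ⟨z, hzAB, hz⟩ := h
  refine exists_left_eigenvector_of_vecMul_pow_mul_eq_zero _ _ (z := Complex.ofRealHom ∘ z) ?_
    fun k hk => ?_
  · exact fun h => hz (funext fun i => Complex.ofReal_injective (congr_fun h i))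
  · ext j
    rw [Fintype.card_fin] at hk
    have := RingHom.map_vecMul Complex.ofRealHom (A ^ k * B) z j
    rw [Matrix.map_mul, Matrix.map_pow, hzAB k hk, Pi.zero_apply, map_zero] at this
    exact this.symm

theorem not_controllable_of_left_eigenvector {n m : ℕ} {A : Matrix (Fin n) (Fin n) ℝ}
    {B : Matrix (Fin n) (Fin m) ℝ} {z : Fin n → ℝ} {μ : ℝ} (hz : z ≠ 0) (hzA : z ᵥ* A = μ • z)
    (hzB : z ᵥ* B = 0) : ¬ Controllable A B := by
  have hpow : ∀ k : ℕ, z ᵥ* A ^ k = μ ^ k • z := by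
    intro k
    induction k with
    | zero => simp
    | succ k ih => rw [pow_succ, ← vecMul_vecMul, ih, smul_vecMul, hzA, smul_smul, pow_succ]
  rw [controllable_iff]
  exact fun h => hz (h z fun k _ => by rw [← vecMul_vecMul, hpow, smul_vecMul, hzB, smul_zero])

theorem Matrix.eq_zero_of_vecMul_apply_eq_zero
    {M : Matrix ι κ K} {w : ι → K} {j : κ} {v : ι} (h : (w ᵥ* M) j = 0) (hv : M v j ≠ 0)
    (hsupp : ∀ x ≠ v, w x * M x j = 0) : w v = 0 := by
  rw [vecMul, dotProduct, sum_eq_single v (fun x _ hx => hsupp x hx) (by simp)] at h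
  exact (mul_eq_zero.1 h).resolve_right hv

end LinearAlgebra

theorem forceClosed_setOf_eq_zero {K V : Type*} [Field K] [Fintype V] [DecidableEq V]
    {E : V → V → Prop} {forbid : V → Prop} {M : Matrix V V K} {w : V → K} (hw : w ᵥ* M = 0)
    (hE : ∀ x u, M x u ≠ 0 → E u x) (hforce : ∀ u v, E u v → ¬(u = v ∧ forbid v) → M v u ≠ 0) :
    ForceClosed E forbid {x | w x = 0} := by
  intro B u v hf hnf hB
  refine eq_zero_of_vecMul_apply_eq_zero (congrFun hw u) (hforce u v hf.2.1 hnf) fun x hxv => ?_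
  by_cases hx : x ∈ B
  · rw [show w x = 0 from hB hx, zero_mul]
  · rw [not_ne_iff.1 fun hM => hxv (hf.2.2 x (hE x u hM) hx), mul_zero]

theorem eq_zero_of_vecMul_BS_eq_zero {K : Type*} [Field K] {n : ℕ} {S : Finset (Fin n)}
    {M : Matrix (Fin n) (Fin S.card) K} (hM : ∀ i j, M i j ≠ 0 ↔ BS S i j) {w : Fin n → K}
    (hw : w ᵥ* M = 0) : ↑S ⊆ {x | w x = 0} := by
  intro x hx
  set j := (S.orderIsoOfFin rfl).symm ⟨x, hx⟩
  have hxj : BS S x j := by simp [BS, j]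
  refine eq_zero_of_vecMul_apply_eq_zero (congrFun hw j) ((hM x j).2 hxj) fun y hy => ?_
  rw [not_ne_iff.1 fun hMy => hy (((hM y j).1 hMy).symm.trans hxj), mul_zero]

theorem sControllable_of_forcing {n : ℕ} {A : Fin n → Fin n → Prop} {S : Finset (Fin n)}
    (hzf : zfClosure (fun u v => A v u) S = univ) {l : List (Fin n × Fin n)}
    (hl : IsChronListAvoiding (fun u v => A v u ∨ u = v) (fun v => A v v) S l)
    (hcov : chainSet S l = univ) : SControllable A (BS S) := by
  rintro At Bt ⟨hA, hB⟩
  by_contra hc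
  obtain ⟨w, μ, hw0, hwA, hwB⟩ := exists_complex_left_eigenvector_of_not_controllable hc
  have hAc : ∀ i j, At.map ((↑) : ℝ → ℂ) i j ≠ 0 ↔ A i j := fun i j => by simpa using hA i j
  have hS := eq_zero_of_vecMul_BS_eq_zero (fun i j => by simpa using hB i j) hwB
  suffices ↑(univ : Finset (Fin n)) ⊆ {x | w x = 0} from
    hw0 (funext fun x => this (mem_univ x))
  by_cases hμ : μ = 0
  · rw [← hzf, zfClosure_eq_zfClosureR]
    refine ForceClosed.zfClosureR_subset (forceClosed_setOf_eq_zero (M := At.map (↑)) ?_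
      (fun x u h => (hAc x u).1 h) fun u v huv _ => (hAc v u).2 huv) hS
    rw [hwA, hμ, zero_smul]
  · rw [← hcov]
    refine ForceClosed.chainSet_subset (forceClosed_setOf_eq_zero
      (M := At.map (↑) - μ • 1) ?_ (fun x u hxu => ?_) fun u v huv hnf => ?_) hS hl
    · rw [vecMul_sub, vecMul_smul, vecMul_one, hwA, sub_self]
    · by_cases hux : u = x
      · exact Or.inr hux
      · exact Or.inl ((hAc x u).1 (by simpa [Ne.symm hux] using hxu))
    · by_cases hvu : v = u
      · subst hvu
        have hAt : At v v = 0 := not_ne_iff.1 fun h => hnf ⟨rfl, (hA v v).1 h⟩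
        simpa [hAt] using hμ
      · simpa [hvu] using (hAc v u).2 (huv.resolve_right (Ne.symm hvu))

theorem exists_forall_ne_zero_sum_eq {K ι : Type*} [Field K] [CharZero K] (T : Finset ι) {τ : K}
    (h : τ ≠ 0 ∧ T.Nonempty ∨ τ = 0 ∧ T.card ≠ 1) :
    ∃ g : ι → K, (∀ i ∈ T, g i ≠ 0) ∧ ∑ i ∈ T, g i = τ := by
  rcases h with ⟨hτ, hT⟩ | ⟨rfl, hT⟩
  · have hcard : (T.card : K) ≠ 0 := Nat.cast_ne_zero.2 hT.card_pos.ne'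
    refine ⟨fun _ => τ / T.card, fun _ _ => div_ne_zero hτ hcard, ?_⟩
    rw [sum_const, nsmul_eq_mul, mul_div_cancel₀ _ hcard]
  · rcases T.eq_empty_or_nonempty with rfl | ⟨a, ha⟩
    · exact ⟨0, by simp, by simp⟩
    · refine ⟨fun i => 1 - if i = a then (T.card : K) else 0, fun i _ => ?_, ?_⟩
      · dsimp only
        split_ifs
        · exact sub_ne_zero.2 (by exact_mod_cast hT.symm)
        · simp
      · rw [sum_sub_distrib, sum_ite_eq' T a, if_pos ha]
        simp

theorem exists_matrix_pattern_sum_eq {K V : Type*} [Field K] [CharZero K] (P : V → V → Prop)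
    (W : Finset V) (τ : V → K)
    (h : ∀ u, τ u ≠ 0 ∧ (W.filter (P · u)).Nonempty ∨ τ u = 0 ∧ (W.filter (P · u)).card ≠ 1) :
    ∃ M : Matrix V V K, (∀ i j, M i j ≠ 0 ↔ P i j) ∧ ∀ u, ∑ w ∈ W, M w u = τ u := by
  choose g hg0 hgsum using fun u => exists_forall_ne_zero_sum_eq _ (h u)
  refine ⟨of fun w u => if P w u then (if w ∈ W then g u w else 1) else 0,
    fun i j => ?_, fun u => ?_⟩
  · by_cases hP : P i j
    · by_cases hi : i ∈ W
      · simpa [hP, hi] using hg0 j i (mem_filter.2 ⟨hi, hP⟩)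
      · simp [hP, hi]
    · simp [hP]
  · rw [← hgsum u, sum_filter]
    exact sum_congr rfl fun w hw => by simp [hw]

theorem not_sControllable_of_stalled {n : ℕ} {A : Fin n → Fin n → Prop} {S R : Finset (Fin n)}
    (hSR : S ⊆ R) (hR : R ≠ univ) (μ : ℝ)
    (hcol : ∀ u, u ∉ R ∧ μ ≠ 0 ∧ (Rᶜ.filter (A · u)).Nonempty ∨
      (u ∈ R ∨ μ = 0) ∧ (Rᶜ.filter (A · u)).card ≠ 1) :
    ¬ SControllable A (BS S) := by
  intro hsc
  obtain ⟨At, hAt, hsum⟩ := exists_matrix_pattern_sum_eq A Rᶜ (fun u => if u ∈ R then 0 else μ)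
    fun u => by by_cases hu : u ∈ R <;> simpa [hu] using hcol u
  let Bt : Matrix (Fin n) (Fin S.card) ℝ := of fun i j => if BS S i j then 1 else 0
  let z : Fin n → ℝ := fun x => if x ∈ Rᶜ then 1 else 0
  refine not_controllable_of_left_eigenvector (A := At) (B := Bt) (z := z) (μ := μ) ?_ ?_ ?_
    (hsc At Bt ⟨hAt, fun i j => by by_cases h : BS S i j <;> simp [Bt, h]⟩)
  · obtain ⟨x, hx⟩ := not_forall.1 fun h => hR (eq_univ_of_forall h)
    exact fun h => by simpa [z, hx] using congrFun h x
  · ext u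
    simp only [vecMul, dotProduct, z, ite_mul, one_mul, zero_mul, sum_ite_mem, univ_inter, hsum]
    by_cases hu : u ∈ R <;> simp [hu]
  · ext j
    simp only [vecMul, dotProduct, Pi.zero_apply]
    refine sum_eq_zero fun x _ => ?_
    by_cases h : BS S x j
    · simp [z, hSR (h ▸ (S.orderIsoOfFin rfl j).2)]
    · simp [Bt, h]

theorem zfClosure_eq_univ_of_sControllable {n : ℕ} {A : Fin n → Fin n → Prop}
    {S : Finset (Fin n)} (h : SControllable A (BS S)) :
    zfClosure (fun u v => A v u) S = univ := by
  rw [zfClosure_eq_zfClosureR]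
  by_contra hR
  refine not_sControllable_of_stalled (subset_zfClosureR S) hR 0
    (fun u => Or.inr ⟨Or.inr rfl, fun hcard => ?_⟩) h
  obtain ⟨v, hv⟩ := card_eq_one.1 hcard
  exact ((validForce_iff (E := fun u v => A v u)).2 hv).eq_of_zfClosureR.2

theorem exists_isChronListAvoiding_of_sControllable {n : ℕ} {A : Fin n → Fin n → Prop}
    {S : Finset (Fin n)} (h : SControllable A (BS S)) :
    ∃ l, IsChronListAvoiding (fun u v => A v u ∨ u = v) (fun v => A v v) S l ∧
      chainSet S l = univ := by
  obtain ⟨l, hl, hlR⟩ := exists_isChronListAvoiding_zfClosureR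
    (E := fun u v => A v u ∨ u = v) (forbid := fun v => A v v) S
  refine ⟨l, hl, hlR ▸ ?_⟩
  set R := zfClosureR (fun u v => A v u ∨ u = v) (fun v => A v v) S
  by_contra hR
  refine not_sControllable_of_stalled (subset_zfClosureR S) hR 1 (fun u => ?_) h
  by_cases hu : u ∈ R
  · refine Or.inr ⟨Or.inl hu, fun hcard => ?_⟩
    obtain ⟨v, hv⟩ := card_eq_one.1 hcard
    have hloop : Rᶜ.filter (fun w => A w u ∨ u = w) = Rᶜ.filter (A · u) :=
      filter_congr fun w hw => or_iff_left fun huw => mem_compl.1 hw (huw ▸ hu)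
    have hvR : v ∉ R := mem_compl.1 (mem_filter.1 (hv.symm ▸ mem_singleton_self v)).1
    have hforce := (validForce_iff (E := fun u v => A v u ∨ u = v) (B := R)).2 (hloop.trans hv)
    obtain ⟨rfl, -⟩ := hforce.eq_of_zfClosureR
    exact hvR hu
  · refine Or.inl ⟨hu, one_ne_zero, not_not.1 fun hempty => ?_⟩
    have hAu : ∀ w ∉ R, ¬A w u := fun w hwR hA =>
      hempty ⟨w, mem_filter.2 ⟨mem_compl.2 hwR, hA⟩⟩
    have hself : ValidForce (fun u v => A v u ∨ u = v) R u u :=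
      ⟨hu, Or.inr rfl, fun w hw hwR => (hw.resolve_left (hAu w hwR)).symm⟩
    exact hAu u hu hself.eq_of_zfClosureR.2

/-- zero forcing characterization of strong structural
controllability: `(A, B(S))` is s-controllable iff (1) `S` is a zero forcing
set of `G(A)`, and (2) there is a chronological list of forces from `S` in
`G(A_×)` colouring every vertex black that contains no self-force `x → x` at a
vertex `x` with `A_{xx} = ×`. -/
theorem scontrollable_iff_zero_forcing {n : ℕ} (A : Fin n → Fin n → Prop)
    (S : Finset (Fin n)) :
    SControllable A (BS S) ↔
      zfClosure (fun u v => A v u) S = Finset.univ ∧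
      ∃ l : List (Fin n × Fin n),
        IsChronList (fun u v => A v u ∨ u = v) S l ∧
        chainSet S l = Finset.univ ∧
        ∀ p ∈ l, ¬(p.1 = p.2 ∧ A p.2 p.2) := by
  constructor
  · intro h
    obtain ⟨l, ⟨hl, hfree⟩, hcov⟩ := exists_isChronListAvoiding_of_sControllable h
    exact ⟨zfClosure_eq_univ_of_sControllable h, l, hl, hcov, hfree⟩
  · rintro ⟨hzf, l, hl, hcov, hfree⟩
    exact sControllable_of_forcing hzf ⟨hl, hfree⟩ hcov
end
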